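/- Binet-type formula for q-Chebyshev polynomials: T_n(x,s,q) = ∑_{k=0}^{⌊n/2⌋} q^{\binom{n-2k}{2}}·[n choose 2k]_q·x^{n-2k}·∏_{j=0}^{k-1}(x² + q^{2j+1}s), where T_n is defined by T_0 = 1, T_1 = x, T_n = (1+q^{n-1})x·T_{n-1} + q^{n-1}s·T_{n-2}. -/

import Mathlib

open Finset

noncomputable section

/-- The polynomial ring `ℤ[q,x,s]`. -/
abbrev R : Type := MvPolynomial (Fin 3) ℤ

def q : R := MvPolynomial.X 0
def x : R := MvPolynomial.X 1
def s : R := MvPolynomial.X 2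

/-- q-Chebyshev polynomials of the first kind:
`T 0 = 1`, `T 1 = x`, `T n = (1+q^(n-1)) x T (n-1) + q^(n-1) s T (n-2)`. -/
def chebT : ℕ → R
  | 0 => 1
  | 1 => x
  | (n + 2) => (1 + q ^ (n + 1)) * x * chebT (n + 1) + q ^ (n + 1) * s * chebT n

/-- q-Chebyshev polynomials of the second kind:
`U 0 = 1`, `U 1 = (1+q)x`, `U n = (1+q^n) x U (n-1) + q^(n-1) s U (n-2)`. -/
def chebU : ℕ → R
  | 0 => 1
  | 1 => (1 + q) * x
  | (n + 2) => (1 + q ^ (n + 2)) * x * chebU (n + 1) + q ^ (n + 1) * s * chebU n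

/-- The Gaussian binomial coefficient `[n choose k]_q` as a polynomial in `q`,
via the Pascal recursion `[n+1, k+1] = [n, k+1] + q^(n-k) [n, k]`. -/
def gbinom : ℕ → ℕ → R
  | _, 0 => 1
  | 0, _ + 1 => 0
  | (n + 1), (k + 1) => gbinom n (k + 1) + q ^ (n - k) * gbinom n k

/-!
Write the `k`-th summand as `c(n,k) P_k` with `P_k = ∏_{j<k} (x² + q^(2j+1) s)`. Because
`q^(2k+1) s P_k = P_(k+1) - x² P_k`, the term `q^(n+1) s T_n` of the recurrence re-expands in the
products `P_k`, and comparing summands the recurrence fails at index `k` exactly by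
`g(k-1) - g(k)` with `g(k) = q^(n-2k) c(n,k) P_(k+1)`: the defects telescope. The identity behind
each summand is a linear combination of the q-Pascal rule and its mirror image
`[n+1, k+1] = q^(k+1) [n, k+1] + [n, k]`; the two rules differ by the absorption identity
`(1 - q^(k+1)) [n, k+1] = (1 - q^(n-k)) [n, k]`.
-/

lemma gbinom_zero_right (n : ℕ) : gbinom n 0 = 1 := by
  cases n <;> rfl

lemma gbinom_succ_succ (n k : ℕ) :
    gbinom (n + 1) (k + 1) = gbinom n (k + 1) + q ^ (n - k) * gbinom n k :=
  rfl

lemma gbinom_eq_zero_of_lt {n k : ℕ} (h : n < k) : gbinom n k = 0 := by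
  induction n generalizing k with
  | zero => obtain ⟨k, rfl⟩ := Nat.exists_eq_add_one_of_ne_zero h.ne'; rfl
  | succ n ih =>
    obtain ⟨k, rfl⟩ := Nat.exists_eq_add_one_of_ne_zero (by omega : k ≠ 0)
    rw [gbinom_succ_succ, ih (by omega), ih (by omega), mul_zero, add_zero]

lemma gbinom_self (n : ℕ) : gbinom n n = 1 := by
  induction n with
  | zero => rfl
  | succ n ih =>
    rw [gbinom_succ_succ, ih, gbinom_eq_zero_of_lt n.lt_succ_self, Nat.sub_self, pow_zero, one_mul,
      zero_add]

lemma one_sub_q_pow_mul_gbinom_succ (n k : ℕ) :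
    (1 - q ^ (k + 1)) * gbinom n (k + 1) = (1 - q ^ (n - k)) * gbinom n k := by
  induction n generalizing k with
  | zero =>
    rw [gbinom_eq_zero_of_lt k.succ_pos, Nat.zero_sub, pow_zero, sub_self, mul_zero, zero_mul]
  | succ n ih =>
    cases k with
    | zero =>
      have h := ih 0
      rw [gbinom_succ_succ]
      simp only [gbinom_zero_right, Nat.sub_zero, zero_add, pow_one] at h ⊢
      linear_combination h
    | succ j =>
      rcases Nat.lt_or_ge j n with hjn | hnj
      · obtain ⟨m, rfl⟩ := Nat.exists_eq_add_of_lt hjn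
        have h₁ := ih (j + 1)
        have h₀ := ih j
        rw [gbinom_succ_succ, gbinom_succ_succ (j + m + 1) j]
        simp only [show j + m + 1 - (j + 1) = m by omega, show j + m + 1 - j = m + 1 by omega,
          show j + m + 1 + 1 - (j + 1) = m + 1 by omega] at h₁ h₀ ⊢
        linear_combination h₁ + q ^ (m + 1) * h₀
      · rw [gbinom_eq_zero_of_lt (by omega : n + 1 < j + 1 + 1), show n + 1 - (j + 1) = 0 by omega]
        ring

lemma gbinom_succ_succ' (n k : ℕ) :
    gbinom (n + 1) (k + 1) = q ^ (k + 1) * gbinom n (k + 1) + gbinom n k := by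
  linear_combination (gbinom_succ_succ n k) + one_sub_q_pow_mul_gbinom_succ n k

lemma gbinom_four_term (k r : ℕ) :
    q ^ (r + 1) * gbinom (k + r + 4) (k + 2) + gbinom (k + r + 2) (k + 2) =
      (1 + q ^ (k + r + 3)) * gbinom (k + r + 3) (k + 2) +
        q ^ (2 * r + 3) * gbinom (k + r + 2) k := by
  have h₁ : gbinom (k + r + 4) (k + 2) =
      gbinom (k + r + 3) (k + 2) + q ^ (r + 2) * gbinom (k + r + 3) (k + 1) := by
    rw [gbinom_succ_succ, show k + r + 3 - (k + 1) = r + 2 by omega]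
  have h₂ : gbinom (k + r + 3) (k + 1) =
      q ^ (k + 1) * gbinom (k + r + 2) (k + 1) + gbinom (k + r + 2) k :=
    gbinom_succ_succ' _ _
  have h₃ : gbinom (k + r + 3) (k + 2) =
      gbinom (k + r + 2) (k + 2) + q ^ (r + 1) * gbinom (k + r + 2) (k + 1) := by
    rw [gbinom_succ_succ, show k + r + 2 - (k + 1) = r + 1 by omega]
  have h₄ : gbinom (k + r + 3) (k + 2) =
      q ^ (k + 2) * gbinom (k + r + 2) (k + 2) + gbinom (k + r + 2) (k + 1) :=
    gbinom_succ_succ' _ _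
  linear_combination q ^ (r + 1) * h₁ + q ^ (2 * r + 3) * h₂ - (1 + q ^ (k + r + 3)) * h₃ +
    q ^ (r + 1) * h₄

lemma choose_two_succ (n : ℕ) : (n + 1).choose 2 = n.choose 2 + n := by
  rw [Nat.choose_succ_succ', Nat.choose_one_right, add_comm]

def binetProd (k : ℕ) : R :=
  ∏ j ∈ range k, (x ^ 2 + q ^ (2 * j + 1) * s)

def binetCoeff (n k : ℕ) : R :=
  q ^ (n - 2 * k).choose 2 * gbinom n (2 * k) * x ^ (n - 2 * k)

def binetTerm (n k : ℕ) : R :=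
  binetCoeff n k * binetProd k

lemma binetProd_succ (k : ℕ) :
    binetProd (k + 1) = binetProd k * (x ^ 2 + q ^ (2 * k + 1) * s) :=
  prod_range_succ _ _

lemma binetCoeff_eq_zero_of_lt {n k : ℕ} (h : n < 2 * k) : binetCoeff n k = 0 := by
  rw [binetCoeff, gbinom_eq_zero_of_lt h, mul_zero, zero_mul]

lemma q_pow_mul_s_mul_binetTerm (n k : ℕ) :
    q ^ (n + 1) * s * binetTerm n k =
      q ^ (n - 2 * k) * binetCoeff n k * (binetProd (k + 1) - x ^ 2 * binetProd k) := by
  rcases lt_or_ge n (2 * k) with h | h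
  · simp only [binetTerm, binetCoeff_eq_zero_of_lt h, mul_zero, zero_mul]
  · rw [binetTerm, binetProd_succ, show n + 1 = n - 2 * k + (2 * k + 1) by omega, pow_add]
    ring

lemma binetCoeff_add_two_zero (n : ℕ) :
    binetCoeff (n + 2) 0 + q ^ n * binetCoeff n 0 * x ^ 2 =
      (1 + q ^ (n + 1)) * x * binetCoeff (n + 1) 0 := by
  simp only [binetCoeff, mul_zero, Nat.sub_zero, gbinom_zero_right, choose_two_succ, pow_add]
  ring

lemma binetCoeff_add_two_succ (n k : ℕ) :
    binetCoeff (n + 2) (k + 1) + q ^ (n - 2 * (k + 1)) * binetCoeff n (k + 1) * x ^ 2 =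
      (1 + q ^ (n + 1)) * x * binetCoeff (n + 1) (k + 1) +
        q ^ (n - 2 * k) * binetCoeff n k := by
  obtain h | rfl | rfl | ⟨r, rfl⟩ :
      n < 2 * k ∨ n = 2 * k ∨ n = 2 * k + 1 ∨ ∃ r, n = 2 * k + r + 2 := by
    rcases Nat.lt_or_ge n (2 * k + 2) with h | h
    · omega
    · exact Or.inr (Or.inr (Or.inr ⟨n - (2 * k + 2), by omega⟩))
  · simp only [binetCoeff_eq_zero_of_lt (by omega : n + 2 < 2 * (k + 1)),
      binetCoeff_eq_zero_of_lt (by omega : n < 2 * (k + 1)),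
      binetCoeff_eq_zero_of_lt (by omega : n + 1 < 2 * (k + 1)), binetCoeff_eq_zero_of_lt h]
    ring
  · unfold binetCoeff
    rw [show 2 * k + 2 - 2 * (k + 1) = 0 by omega, Nat.sub_self,
      show 2 * (k + 1) = 2 * k + 2 by ring, gbinom_self, gbinom_self,
      gbinom_eq_zero_of_lt (by omega : 2 * k < 2 * k + 2),
      gbinom_eq_zero_of_lt (by omega : 2 * k + 1 < 2 * k + 2)]
    ring
  · unfold binetCoeff
    rw [show 2 * k + 1 + 2 - 2 * (k + 1) = 1 by omega,
      show 2 * k + 1 + 1 - 2 * (k + 1) = 0 by omega,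
      show 2 * k + 1 - 2 * k = 1 by omega, show 2 * (k + 1) = 2 * k + 2 by ring,
      gbinom_eq_zero_of_lt (by omega : 2 * k + 1 < 2 * k + 2), gbinom_self]
    have h₁ : gbinom (2 * k + 3) (2 * k + 2) =
        q ^ (2 * k + 2) + gbinom (2 * k + 2) (2 * k + 1) := by
      rw [gbinom_succ_succ', gbinom_self, mul_one]
    have h₂ : gbinom (2 * k + 2) (2 * k + 1) = 1 + q * gbinom (2 * k + 1) (2 * k) := by
      rw [gbinom_succ_succ, gbinom_self, show 2 * k + 1 - 2 * k = 1 by omega, pow_one]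
    simp only [Nat.choose, pow_zero]
    linear_combination x * h₁ + x * h₂
  · unfold binetCoeff
    rw [show 2 * k + r + 2 + 2 - 2 * (k + 1) = r + 2 by omega,
      show 2 * k + r + 2 + 1 - 2 * (k + 1) = r + 1 by omega,
      show 2 * k + r + 2 - 2 * (k + 1) = r by omega, show 2 * k + r + 2 - 2 * k = r + 2 by omega,
      show 2 * (k + 1) = 2 * k + 2 by ring]
    simp only [choose_two_succ, pow_add]
    linear_combination q ^ r.choose 2 * q ^ r * x ^ (r + 2) * gbinom_four_term (2 * k) r

lemma sum_binetTerm_add_two (n : ℕ) :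
    ∑ k ∈ range (n / 2 + 2), binetTerm (n + 2) k =
      (1 + q ^ (n + 1)) * x * ∑ k ∈ range (n / 2 + 2), binetTerm (n + 1) k +
        q ^ (n + 1) * s * ∑ k ∈ range (n / 2 + 2), binetTerm n k := by
  set g : ℕ → R := fun k ↦ q ^ (n - 2 * k) * binetCoeff n k * binetProd (k + 1) with hg
  set F : ℕ → R := fun k ↦ binetTerm (n + 2) k - (1 + q ^ (n + 1)) * x * binetTerm (n + 1) k -
    q ^ (n + 1) * s * binetTerm n k with hF
  have hF_zero : F 0 = -g 0 := by
    simp only [hF, hg, q_pow_mul_s_mul_binetTerm]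
    unfold binetTerm
    linear_combination binetProd 0 * binetCoeff_add_two_zero n
  have hF_succ (k : ℕ) : F (k + 1) = g k - g (k + 1) := by
    simp only [hF, hg, q_pow_mul_s_mul_binetTerm]
    unfold binetTerm
    linear_combination binetProd (k + 1) * binetCoeff_add_two_succ n k
  have hg_top : g (n / 2 + 1) = 0 := by
    simp only [hg, binetCoeff_eq_zero_of_lt (by omega : n < 2 * (n / 2 + 1)), mul_zero, zero_mul]
  have hsum : ∑ k ∈ range (n / 2 + 2), F k = 0 := by
    rw [sum_range_succ', hF_zero]
    simp only [hF_succ]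
    rw [sum_range_sub', hg_top]
    ring
  simp only [hF, sum_sub_distrib, ← mul_sum] at hsum
  linear_combination hsum

lemma sum_range_binetTerm_of_lt {n M : ℕ} (hM : n / 2 < M) :
    ∑ k ∈ range M, binetTerm n k = ∑ k ∈ range (n / 2 + 1), binetTerm n k := by
  refine (sum_subset (range_subset_range.2 (by omega)) fun k _ hk ↦ ?_).symm
  rw [mem_range] at hk
  rw [binetTerm, binetCoeff_eq_zero_of_lt (by omega), zero_mul]

/-- Binet-type formula for the q-Chebyshev polynomials of the first kind. -/
theorem chebT_binet (n : ℕ) :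
    chebT n = ∑ k ∈ range (n / 2 + 1),
      q ^ Nat.choose (n - 2 * k) 2 * gbinom n (2 * k) * x ^ (n - 2 * k) *
        ∏ j ∈ range k, (x ^ 2 + q ^ (2 * j + 1) * s) := by
  change chebT n = ∑ k ∈ range (n / 2 + 1), binetTerm n k
  induction n using Nat.twoStepInduction with
  | zero => simp [chebT, binetTerm, binetCoeff, binetProd, gbinom_zero_right]
  | one => simp [chebT, binetTerm, binetCoeff, binetProd, gbinom_zero_right]
  | more n ih₀ ih₁ =>
    rw [chebT, ih₀, ih₁, ← sum_range_binetTerm_of_lt (n := n) (M := n / 2 + 2) (by omega),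
      ← sum_range_binetTerm_of_lt (n := n + 1) (M := n / 2 + 2) (by omega),
      show (n + 2) / 2 + 1 = n / 2 + 2 by omega, sum_binetTerm_add_two]

end
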